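/- arXiv:math/0402341 — 3 statements merged into one kernel-verified Lean document; each statement's English description precedes it below -/
import Mathlib

section
/- For a positive real M, a real number u with |u| ≤ M, and n ≥ 1/M, one has 1/(2M) ≤ n·η(n·u)², where η(t) = √((1 − e^{−t})/t) for t ≠ 0 and η(0) = 1. -/
noncomputable def eta (t : ℝ) : ℝ :=
  if t = 0 then 1 else Real.sqrt ((1 - Real.exp (-t)) / t)

lemma half_le_one_sub_exp_neg {s : ℝ} (hs0 : 0 ≤ s) (hs1 : s ≤ 1) :
    s / 2 ≤ 1 - Real.exp (-s) := by
  have hconv := convexOn_exp.2 (Set.mem_univ (0:ℝ)) (Set.mem_univ (-1:ℝ))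
    (by linarith : (0:ℝ) ≤ 1 - s) hs0 (by ring)
  simp only [smul_eq_mul, Real.exp_zero] at hconv
  have h1 : Real.exp ((1 - s) * 0 + s * (-1)) = Real.exp (-s) := by ring_nf
  have he : Real.exp (-1) ≤ 1/2 := by
    rw [Real.exp_neg]
    rw [inv_le_comm₀ (Real.exp_pos 1) (by norm_num)]
    have := Real.exp_one_gt_d9
    linarith
  rw [h1] at hconv
  nlinarith [hconv]

theorem stmt_2 (M : ℝ) (hM : 0 < M) (u : ℝ) (hu : |u| ≤ M)
    (n : ℝ) (hn : 1 / M ≤ n) :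
    1 / (2 * M) ≤ n * (eta (n * u)) ^ 2 := by
  have hMn : 0 < n := lt_of_lt_of_le (by positivity) hn
  have hhalf : 1 / (2 * M) ≤ 1 / M := by
    apply div_le_div_of_nonneg_left (by norm_num) hM; linarith
  rcases eq_or_ne u 0 with h0 | h0
  · rw [h0, mul_zero]
    have he : eta 0 = 1 := by simp [eta]
    rw [he, one_pow, mul_one]
    linarith
  · have ht : n * u ≠ 0 := mul_ne_zero (ne_of_gt hMn) h0
    have hnonneg : 0 ≤ (1 - Real.exp (-(n*u))) / (n*u) := by
      rcases lt_or_gt_of_ne ht with h | h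
      · have h1 : 1 ≤ Real.exp (-(n*u)) := Real.one_le_exp (by linarith)
        exact div_nonneg_iff.mpr (Or.inr ⟨by linarith, le_of_lt h⟩)
      · have h1 : Real.exp (-(n*u)) ≤ 1 := Real.exp_le_one_iff.mpr (by linarith)
        exact div_nonneg (by linarith) (le_of_lt h)
    have hsq : (eta (n*u))^2 = (1 - Real.exp (-(n*u))) / (n*u) := by
      simp only [eta, ht, if_false]
      exact Real.sq_sqrt hnonneg
    rw [hsq]
    have heq : n * ((1 - Real.exp (-(n*u))) / (n*u)) = (1 - Real.exp (-(n*u))) / u := by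
      field_simp
    rw [heq]
    rcases lt_or_gt_of_ne h0 with hu0 | hu0
    · -- u < 0
      have hexp : 1 - Real.exp (-(n*u)) ≤ n * u := by
        have := Real.add_one_le_exp (-(n*u))
        linarith
      have : n ≤ (1 - Real.exp (-(n*u))) / u := by
        rw [le_div_iff_of_neg hu0]
        linarith [hexp]
      calc 1/(2*M) ≤ 1/M := hhalf
        _ ≤ n := hn
        _ ≤ _ := this
    · -- u > 0
      have hs0 : 0 ≤ u / M := by positivity
      have hs1 : u / M ≤ 1 := by
        rw [div_le_one hM]
        calc u ≤ |u| := le_abs_self u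
          _ ≤ M := hu
      have hts : u / M ≤ n * u := by
        have := mul_le_mul_of_nonneg_right hn (le_of_lt hu0)
        calc u / M = 1 / M * u := by ring
          _ ≤ n * u := this
      have hmono : Real.exp (-(n*u)) ≤ Real.exp (-(u/M)) :=
        Real.exp_le_exp.mpr (by linarith)
      have hkey : u / M / 2 ≤ 1 - Real.exp (-(n*u)) := by
        have := half_le_one_sub_exp_neg hs0 hs1
        linarith
      rw [le_div_iff₀ hu0]
      calc 1 / (2*M) * u = u / M / 2 := by
            rw [div_div, mul_comm M 2, div_mul_eq_mul_div, one_mul]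
        _ ≤ _ := hkey
end

section
/- Let E be a finite-dimensional complex inner product space, M > 0, and h a self-adjoint endomorphism of E with spectrum contained in [−M, M]. Then for all n ≥ 1/M and all x ∈ E, (1/(2M))·‖x‖² ≤ n·‖η(n·h)(x)‖², where η(t) = √((1−e^{−t})/t) for t ≠ 0, η(0) = 1, and η(n·h) is defined by functional calculus on the spectral decomposition of h. -/
open scoped ComplexInnerProductSpace

lemma eta_sq_nonneg_arg (s : ℝ) : 0 ≤ (1 - Real.exp (-s)) / s := by
  rcases lt_trichotomy s 0 with h | h | h
  · rw [div_nonneg_iff]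
    right
    constructor
    · have : (0:ℝ) ≤ -s := by linarith
      have := Real.one_le_exp this
      linarith
    · exact h.le
  · simp [h]
  · apply div_nonneg _ h.le
    have : Real.exp (-s) ≤ 1 := Real.exp_le_one_iff.mpr (by linarith)
    linarith

lemma eta_sq (s : ℝ) (hs : s ≠ 0) : (eta s) ^ 2 = (1 - Real.exp (-s)) / s := by
  rw [eta, if_neg hs, Real.sq_sqrt (eta_sq_nonneg_arg s)]

lemma key (M n t : ℝ) (hM : 0 < M) (hn : 1 / M ≤ n) (ht : t ∈ Set.Icc (-M) M) :
    1 / (2 * M) ≤ n * (eta (n * t)) ^ 2 := by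
  have hnpos : 0 < n := lt_of_lt_of_le (by positivity) hn
  have hhalf : 1 / (2 * M) ≤ n := by
    calc 1 / (2 * M) ≤ 1 / M := by
          rw [div_le_div_iff₀ (by positivity) hM]; linarith
      _ ≤ n := hn
  obtain ⟨ht1, ht2⟩ := ht
  rcases lt_trichotomy t 0 with h | h | h
  · have hnt : n * t ≠ 0 := (mul_neg_of_pos_of_neg hnpos h).ne
    rw [eta_sq _ hnt]
    have heq : n * ((1 - Real.exp (-(n * t))) / (n * t)) = (1 - Real.exp (-(n * t))) / t := by
      rw [mul_comm n t, div_mul_eq_div_div, mul_comm n, div_mul_cancel₀ _ hnpos.ne']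
    rw [heq, le_div_iff_of_neg h]
    have hexp := Real.add_one_le_exp (-(n * t))
    have h2 : n * t ≤ 1 / (2 * M) * t := mul_le_mul_of_nonpos_right hhalf h.le
    linarith
  · subst h
    have he : eta (n * 0) = 1 := by simp [eta]
    rw [he]
    simpa using hhalf
  · have hnt : (0:ℝ) < n * t := mul_pos hnpos h
    rw [eta_sq _ hnt.ne']
    have hu : t / M ≤ 1 := (div_le_one hM).mpr ht2
    have hu0 : 0 < t / M := by positivity
    have h1 : t / M ≤ n * t := by
      rw [div_le_iff₀ hM]
      nlinarith [(div_le_iff₀ hM).mp hn]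
    have h2 : Real.exp (-(n * t)) ≤ 1 / (1 + t / M) := by
      have e1 : Real.exp (-(n * t)) ≤ Real.exp (-(t / M)) :=
        Real.exp_le_exp.mpr (by linarith)
      have e2 : t / M + 1 ≤ Real.exp (t / M) := Real.add_one_le_exp _
      have e3 : Real.exp (-(t / M)) ≤ 1 / (1 + t / M) := by
        rw [Real.exp_neg, inv_eq_one_div, div_le_div_iff₀ (Real.exp_pos _) (by linarith)]
        nlinarith
      linarith
    have h3 : t / (2 * M) ≤ 1 - Real.exp (-(n * t)) := by
      have e4 : 1 - 1 / (1 + t / M) = (t / M) / (1 + t / M) := by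
        field_simp
        ring
      have h4 : (t / M) / 2 ≤ (t / M) / (1 + t / M) :=
        div_le_div_of_nonneg_left hu0.le (by linarith) (by linarith)
      have h5 : t / M / 2 = t / (2 * M) := by ring
      linarith
    have heq : n * ((1 - Real.exp (-(n * t))) / (n * t)) = (1 - Real.exp (-(n * t))) / t := by
      rw [mul_comm n t, div_mul_eq_div_div, mul_comm n, div_mul_cancel₀ _ hnpos.ne']
    rw [heq, le_div_iff₀ h]
    calc 1 / (2 * M) * t = t / (2 * M) := by ring
      _ ≤ _ := h3

/-- For a self-adjoint endomorphism `h` of a finite-dimensional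
complex inner product space, given by an orthonormal eigenbasis `b` and real
eigenvalues `lam i ∈ [-M, M]`, and any `n ≥ 1/M`,
`(1/(2M))·‖x‖² ≤ n·‖η(n·h)(x)‖²` where `η(n·h)(x) = ∑ i, η (n * lam i) • ⟪b i, x⟫ • b i`. -/
theorem stmt_6 {E : Type*} [NormedAddCommGroup E] [InnerProductSpace ℂ E]
    [FiniteDimensional ℂ E] {ι : Type*} [Fintype ι]
    (b : OrthonormalBasis ι ℂ E) (lam : ι → ℝ)
    (M : ℝ) (hM : 0 < M) (hspec : ∀ i, lam i ∈ Set.Icc (-M) M)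
    (n : ℝ) (hn : 1 / M ≤ n) (x : E) :
    (1 / (2 * M)) * ‖x‖ ^ 2 ≤
      n * ‖∑ i, (eta (n * lam i) : ℂ) • (⟪b i, x⟫ • b i)‖ ^ 2 := by
  have hy : ∀ c : ι → ℂ, ‖∑ i, c i • b i‖ ^ 2 = ∑ i, ‖c i‖ ^ 2 := by
    intro c
    rw [@norm_sq_eq_re_inner ℂ, b.orthonormal.inner_sum, map_sum]
    refine Finset.sum_congr rfl fun i _ => ?_
    rw [RCLike.conj_mul]
    norm_cast
  have hx : ‖x‖ ^ 2 = ∑ i, ‖⟪b i, x⟫‖ ^ 2 := by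
    conv_lhs => rw [← b.sum_repr' x]
    exact hy _
  have hsum : ∑ i, (eta (n * lam i) : ℂ) • (⟪b i, x⟫ • b i)
      = ∑ i, ((eta (n * lam i) : ℂ) * ⟪b i, x⟫) • b i := by
    simp [smul_smul]
  rw [hsum, hy, hx, Finset.mul_sum, Finset.mul_sum]
  refine Finset.sum_le_sum fun i _ => ?_
  have hk := key M n (lam i) hM hn (hspec i)
  have hnv : ‖(eta (n * lam i) : ℂ) * ⟪b i, x⟫‖ ^ 2
      = eta (n * lam i) ^ 2 * ‖⟪b i, x⟫‖ ^ 2 := by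
    rw [norm_mul, mul_pow, Complex.norm_real, Real.norm_eq_abs, sq_abs]
  rw [hnv]
  have hv : (0:ℝ) ≤ ‖⟪b i, x⟫‖ ^ 2 := by positivity
  nlinarith [mul_le_mul_of_nonneg_right hk hv]
end

section
/- Let V be a finite-dimensional Hermitian space and f a Hermitian endomorphism of V. Then for every nonzero v ∈ V, the function t ↦ ⟨f e^{tf}v, e^{tf}v⟩/‖e^{tf}v‖² is monotone nondecreasing in t. -/
/-! In the eigenbasis the Rayleigh quotient at time `t` is the mean of the eigenvalues `lam i`
for the weights `exp (2 t lam i) ‖⟪b i, v⟫‖²`. Passing from time `s` to `t ≥ s` multiplies the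
weights by `exp (2 (t - s) lam i)`, which increases with `lam i`, and by the weighted Chebyshev
sum inequality such a reweighting can only raise the mean. -/

open scoped ComplexInnerProductSpace

open Finset in
theorem Monovary.sum_mul_sum_le_sum_mul_sum {ι R : Type*} [Fintype ι]
    [CommRing R] [LinearOrder R] [IsStrictOrderedRing R] {w f g : ι → R}
    (hfg : Monovary f g) (hw : 0 ≤ w) :
    (∑ i, w i * f i) * (∑ i, w i * g i) ≤ (∑ i, w i) * ∑ i, w i * f i * g i := by
  have key : ∑ i, ∑ j, w i * w j * ((f j - f i) * (g j - g i)) =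
      2 * ((∑ i, w i) * (∑ i, w i * f i * g i) - (∑ i, w i * f i) * ∑ i, w i * g i) := by
    calc _ = ∑ i, ∑ j, (w i * (w j * f j * g j) + w i * f i * g i * w j
          - w i * g i * (w j * f j) - w i * f i * (w j * g j)) :=
          sum_congr rfl fun i _ ↦ sum_congr rfl fun j _ ↦ by ring
      _ = _ := by
          simp only [sum_add_distrib, sum_sub_distrib, ← mul_sum, ← sum_mul]
          ring
  have : 0 ≤ ∑ i, ∑ j, w i * w j * ((f j - f i) * (g j - g i)) :=
    sum_nonneg fun i _ ↦ sum_nonneg fun j _ ↦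
      mul_nonneg (mul_nonneg (hw i) (hw j)) (hfg.sub_mul_sub_nonneg i j)
  linarith

open Finset Real in
theorem monotone_sum_mul_exp_div_sum_exp {ι : Type*} [Fintype ι] (lam c : ι → ℝ) (hc : 0 ≤ c) :
    Monotone fun t : ℝ ↦
      (∑ i, lam i * exp (t * lam i) * c i) / ∑ i, exp (t * lam i) * c i := by
  intro s t hst
  rcases eq_or_ne c 0 with rfl | hne
  · simp
  obtain ⟨k, hk⟩ := Function.ne_iff.1 hne
  replace hk : 0 < c k := (hc k).lt_of_ne' hk
  have hD (u : ℝ) : 0 < ∑ i, exp (u * lam i) * c i :=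
    sum_pos' (fun i _ ↦ mul_nonneg (exp_pos _).le (hc i)) ⟨k, mem_univ k, by positivity⟩
  rw [div_le_div_iff₀ (hD s) (hD t)]
  have hmono : Monovary (fun i ↦ exp ((t - s) * lam i)) lam :=
    (monovary_self lam).comp_monotone_left fun x y hxy ↦
      exp_le_exp.2 (mul_le_mul_of_nonneg_left hxy (sub_nonneg.2 hst))
  have hsplit (i : ι) : exp (t * lam i) = exp ((t - s) * lam i) * exp (s * lam i) := by
    rw [← exp_add]; ring_nf
  have := hmono.sum_mul_sum_le_sum_mul_sum (w := fun i ↦ exp (s * lam i) * c i)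
    fun i ↦ mul_nonneg (exp_pos _).le (hc i)
  simp only [hsplit]
  convert this using 1 <;> rw [mul_comm] <;> congr 1 <;> exact sum_congr rfl fun i _ ↦ by ring

/-- `b` is an orthonormal eigenbasis of `f` with eigenvalues `lam`; in it the Rayleigh quotient
`⟪f e^{tf} v, e^{tf} v⟫ / ‖e^{tf} v‖²` is the ratio below. -/
theorem stmt_11_general {E : Type*} [NormedAddCommGroup E] [InnerProductSpace ℂ E]
    {ι : Type*} [Fintype ι]
    (b : OrthonormalBasis ι ℂ E) (lam : ι → ℝ) (v : E) :
    Monotone (fun t : ℝ =>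
      (∑ i, lam i * Real.exp (2 * t * lam i) * ‖⟪b i, v⟫‖ ^ 2) /
        (∑ i, Real.exp (2 * t * lam i) * ‖⟪b i, v⟫‖ ^ 2)) := by
  exact (monotone_sum_mul_exp_div_sum_exp lam _ fun _ ↦ sq_nonneg _).comp
    fun _ _ h ↦ by linarith

/-- For a Hermitian endomorphism `f` of a finite-dimensional
Hermitian space (given by an orthonormal eigenbasis `b` with real eigenvalues
`lam i`) and a nonzero vector `v`, the Rayleigh quotient
`t ↦ ⟨f e^{tf} v, e^{tf} v⟩ / ‖e^{tf} v‖²`, which in the eigenbasis equals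
`t ↦ (∑ i, lam i · e^{2t·lam i} · ‖⟪b i, v⟫‖²) / (∑ i, e^{2t·lam i} · ‖⟪b i, v⟫‖²)`,
is monotone nondecreasing in `t`. -/
theorem stmt_11 {E : Type*} [NormedAddCommGroup E] [InnerProductSpace ℂ E]
    [FiniteDimensional ℂ E] {ι : Type*} [Fintype ι]
    (b : OrthonormalBasis ι ℂ E) (lam : ι → ℝ) (v : E) (hv : v ≠ 0) :
    Monotone (fun t : ℝ =>
      (∑ i, lam i * Real.exp (2 * t * lam i) * ‖⟪b i, v⟫‖ ^ 2) /
        (∑ i, Real.exp (2 * t * lam i) * ‖⟪b i, v⟫‖ ^ 2)) :=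
  stmt_11_general b lam v
end
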